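/- If Q is a forest on n vertices, then the Conway polynomial ∇(Q)(z) = Σ_{i ≥ 0} b_i(Q) z^{n−2i} (where b_i(Q) is the number of size-i matchings of Q) has all coefficients nonnegative, and its coefficient sequence is log-concave: b_i(Q)² ≥ b_{i−1}(Q)·b_{i+1}(Q) for all i ≥ 1. -/
import Mathlib


open scoped Classical

noncomputable section

/-- `M` is a matching of `G`: a set of edges, no two sharing an endpoint. -/
def IsMatching {V : Type} (G : SimpleGraph V) (M : Finset (Sym2 V)) : Prop :=
  (∀ e ∈ M, e ∈ G.edgeSet) ∧ ∀ e ∈ M, ∀ e' ∈ M, e ≠ e' → ∀ x : V, x ∈ e → x ∉ e'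

/-- `b_i(Q)`: the number of matchings of size `i` in `G`. -/
def matchCount {V : Type} [Fintype V] [DecidableEq V] (G : SimpleGraph V) (i : ℕ) : ℕ :=
  Set.ncard {M : Finset (Sym2 V) | M.card = i ∧ IsMatching G M}

open scoped symmDiff
set_option maxHeartbeats 1000000

namespace LCAux
variable {α : Type} [LinearOrder α]

/-- prefix sum of `w` over elements of `T` up to `K`. -/
def pre (T : Finset α) (w : α → ℤ) (K : α) : ℤ := ∑ K' ∈ T.filter (· ≤ K), w K'

/-- minimum of 0 and all prefix sums. -/
def lowv (T : Finset α) (w : α → ℤ) : ℤ :=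
  (insert (0:ℤ) (T.image (pre T w))).min' (Finset.insert_nonempty _ _)

/-- the set of minimum elements of `s` (empty or a singleton). -/
def mins (s : Finset α) : Finset α := s.filter (fun K => ∀ K' ∈ s, K ≤ K')

def goodSet (T : Finset α) (w : α → ℤ) : Finset α :=
  T.filter (fun K => ∀ K' ∈ T, K ≤ K' → lowv T w + 1 ≤ pre T w K')

lemma mins_eq_singleton {s : Finset α} {c : α} (hc : c ∈ s) (h : ∀ K ∈ s, c ≤ K) :
    mins s = {c} := by
  ext K
  simp only [mins, Finset.mem_filter, Finset.mem_singleton]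
  constructor
  · rintro ⟨hK, hall⟩
    exact le_antisymm (hall c hc) (h K hK)
  · rintro rfl
    exact ⟨hc, h⟩

lemma lowv_nonpos (T : Finset α) (w : α → ℤ) : lowv T w ≤ 0 :=
  Finset.min'_le _ _ (Finset.mem_insert_self _ _)

lemma lowv_le_pre (T : Finset α) (w : α → ℤ) {K : α} (hK : K ∈ T) : lowv T w ≤ pre T w K :=
  Finset.min'_le _ _ (Finset.mem_insert_of_mem (Finset.mem_image_of_mem _ hK))

theorem part1 (T : Finset α) (w : α → ℤ)
    (hw : ∀ K ∈ T, w K = 1 ∨ w K = -1) (hsum : ∑ K ∈ T, w K = 2) :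
    ∃ c ∈ T, w c = 1 ∧ mins (goodSet T w) = {c} ∧
      pre T w c = lowv T w + 1 ∧
      (∀ K ∈ T, c ≤ K → lowv T w + 1 ≤ pre T w K) := by
  have hTne : T.Nonempty := by
    rcases T.eq_empty_or_nonempty with h | h
    · simp [h] at hsum
    · exact h
  set μ := lowv T w with hμ
  -- goodSet is nonempty: max' works
  have hmaxmem : T.max' hTne ∈ goodSet T w := by
    refine Finset.mem_filter.mpr ⟨T.max'_mem hTne, fun K' hK' hle => ?_⟩
    have : K' = T.max' hTne := le_antisymm (T.le_max' _ hK') hle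
    subst this
    have : T.filter (· ≤ T.max' hTne) = T := by
      apply Finset.filter_true_of_mem
      exact fun x hx => T.le_max' _ hx
    have hpre : pre T w (T.max' hTne) = 2 := by rw [pre, this, hsum]
    rw [hpre]
    have := lowv_nonpos T w
    omega
  have hGne : (goodSet T w).Nonempty := ⟨_, hmaxmem⟩
  set c := (goodSet T w).min' hGne with hc
  have hcmem : c ∈ goodSet T w := Finset.min'_mem _ _
  have hcT : c ∈ T := (Finset.mem_filter.mp hcmem).1
  have hge : ∀ K ∈ T, c ≤ K → μ + 1 ≤ pre T w K := (Finset.mem_filter.mp hcmem).2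
  have hmins : mins (goodSet T w) = {c} :=
    mins_eq_singleton hcmem (fun K hK => Finset.min'_le _ _ hK)
  -- key: w c = 1 and pre c = μ + 1
  have hkey : w c = 1 ∧ pre T w c = μ + 1 := by
    by_cases hT' : (T.filter (· < c)).Nonempty
    · -- predecessor case
      set Km := (T.filter (· < c)).max' hT' with hKm
      have hKmmem := (T.filter (· < c)).max'_mem hT'
      have hKmT : Km ∈ T := (Finset.mem_filter.mp hKmmem).1
      have hKmlt : Km < c := (Finset.mem_filter.mp hKmmem).2
      have hKmnotgood : Km ∉ goodSet T w := by
        intro h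
        exact absurd (Finset.min'_le _ _ h) (not_le.mpr hKmlt)
      have : ∃ K' ∈ T, Km ≤ K' ∧ pre T w K' < μ + 1 := by
        by_contra h
        push_neg at h
        exact hKmnotgood (Finset.mem_filter.mpr ⟨hKmT, fun K' h1 h2 => h K' h1 h2⟩)
      obtain ⟨K', hK'T, hKmle, hK'lt⟩ := this
      have hK'ltc : K' < c := by
        by_contra h
        push_neg at h
        exact absurd (hge K' hK'T h) (not_le.mpr hK'lt)
      have hK'eq : K' = Km :=
        le_antisymm ((T.filter (· < c)).le_max' _ (Finset.mem_filter.mpr ⟨hK'T, hK'ltc⟩)) hKmle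
      have hKmax : ∀ K ∈ T, K < c → K ≤ K' := by
        intro K h1 h2
        rw [hK'eq]
        exact (T.filter (· < c)).le_max' _ (Finset.mem_filter.mpr ⟨h1, h2⟩)
      have hpreKm : pre T w K' = μ := by
        have := lowv_le_pre T w hK'T
        omega
      -- pre c = pre Km + w c
      have hsplit : T.filter (· ≤ c) = insert c (T.filter (· ≤ K')) := by
        ext K
        simp only [Finset.mem_filter, Finset.mem_insert]
        constructor
        · rintro ⟨hKT, hKle⟩
          rcases lt_or_eq_of_le hKle with h | h
          · exact Or.inr ⟨hKT, hKmax K hKT h⟩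
          · exact Or.inl h
        · rintro (rfl | ⟨hKT, hKle⟩)
          · exact ⟨hcT, le_refl _⟩
          · exact ⟨hKT, le_of_lt (lt_of_le_of_lt hKle hK'ltc)⟩
      have hnotmem : c ∉ T.filter (· ≤ K') := by
        simp only [Finset.mem_filter, not_and]
        intro _ h
        exact absurd (lt_of_le_of_lt h hK'ltc) (lt_irrefl c)
      have hprec : pre T w c = w c + pre T w K' := by
        rw [pre, hsplit, Finset.sum_insert hnotmem]; rfl
      have h1 : μ + 1 ≤ pre T w c := hge c hcT (le_refl c)
      rw [hprec, hpreKm] at h1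
      have hwc : w c = 1 := by rcases hw c hcT with h | h <;> omega
      exact ⟨hwc, by rw [hprec, hpreKm, hwc]; ring⟩
    · -- c is the minimum of T
      have hμ0 : μ = 0 := by
        rcases eq_or_lt_of_le (lowv_nonpos T w) with h | h
        · exact h
        · exfalso
          have hmem := Finset.min'_mem (insert (0:ℤ) (T.image (pre T w)))
            (Finset.insert_nonempty _ _)
          rcases Finset.mem_insert.mp hmem with h0 | himg
          · have h0' : lowv T w = 0 := h0
            omega
          · obtain ⟨K, hKT, hKeq⟩ := Finset.mem_image.mp himg
            have hKval : pre T w K = μ := hKeq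
            have hKc : ¬ c ≤ K := by
              intro hle
              have := hge K hKT hle
              omega
            push_neg at hKc
            exact hT' ⟨K, Finset.mem_filter.mpr ⟨hKT, hKc⟩⟩
      have hsingle : T.filter (· ≤ c) = {c} := by
        ext K
        simp only [Finset.mem_filter, Finset.mem_singleton]
        constructor
        · rintro ⟨hKT, hKle⟩
          rcases lt_or_eq_of_le hKle with h | h
          · exact absurd ⟨K, Finset.mem_filter.mpr ⟨hKT, h⟩⟩ hT'
          · exact h
        · rintro rfl; exact ⟨hcT, le_refl _⟩
      have hprec : pre T w c = w c := by rw [pre, hsingle, Finset.sum_singleton]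
      have h1 : μ + 1 ≤ pre T w c := hge c hcT (le_refl c)
      have hwc : w c = 1 := by
        rcases hw c hcT with h | h
        · exact h
        · rw [hprec, h] at h1; omega
      exact ⟨hwc, by rw [hprec, hwc, hμ0]; ring⟩
  exact ⟨c, hcT, hkey.1, hmins, hkey.2, hge⟩

theorem part2 (T : Finset α) (w w' : α → ℤ) (c : α)
    (hcT : c ∈ T)
    (hw' : ∀ K ∈ T, w' K = if K = c then -1 else w K)
    (hwc : w c = 1)
    (hprec : pre T w c = lowv T w + 1)
    (hge : ∀ K ∈ T, c ≤ K → lowv T w + 1 ≤ pre T w K) :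
    mins (T.filter (fun K => pre T w' K = lowv T w')) = {c} := by
  set μ := lowv T w with hμ
  have hμ0 : μ ≤ 0 := lowv_nonpos T w
  have hpre' : ∀ K, pre T w' K = pre T w K - (if c ≤ K then 2 else 0) := by
    intro K
    have : pre T w' K - pre T w K =
        ∑ K' ∈ T.filter (· ≤ K), (w' K' - w K') := by
      rw [pre, pre, ← Finset.sum_sub_distrib]
    have h2 : ∑ K' ∈ T.filter (· ≤ K), (w' K' - w K') =
        if c ∈ T.filter (· ≤ K) then -2 else 0 := by
      rw [← Finset.sum_ite_eq' (T.filter (· ≤ K)) c (fun _ => (-2:ℤ))]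
      apply Finset.sum_congr rfl
      intro x hx
      have hxT : x ∈ T := (Finset.mem_filter.mp hx).1
      rw [hw' x hxT]
      by_cases h : x = c
      · subst h; simp [hwc]
      · simp [h]
    have h3 : (c ∈ T.filter (· ≤ K)) ↔ c ≤ K := by
      simp [Finset.mem_filter, hcT]
    by_cases h : c ≤ K
    · rw [if_pos (h3.mpr h)] at h2
      rw [if_pos h]
      omega
    · rw [if_neg (fun hc => h (h3.mp hc))] at h2
      rw [if_neg h]
      omega
  have hlow : ∀ K ∈ T, μ ≤ pre T w K := fun K hK => lowv_le_pre T w hK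
  -- value of pre' on c
  have hprec' : pre T w' c = μ - 1 := by
    rw [hpre' c, if_pos (le_refl c), hprec]; ring
  have hμ' : lowv T w' = μ - 1 := by
    refine le_antisymm ?_ ?_
    · calc lowv T w' ≤ pre T w' c := lowv_le_pre T w' hcT
        _ = μ - 1 := hprec'
    · apply Finset.le_min'
      intro x hx
      rcases Finset.mem_insert.mp hx with rfl | hx
      · omega
      · obtain ⟨K, hKT, rfl⟩ := Finset.mem_image.mp hx
        rw [hpre' K]
        by_cases h : c ≤ K
        · have := hge K hKT h; rw [if_pos h]; omega
        · have := hlow K hKT; rw [if_neg h]; omega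
  apply mins_eq_singleton
  · exact Finset.mem_filter.mpr ⟨hcT, by rw [hprec', hμ']⟩
  · intro K hK
    obtain ⟨hKT, hKval⟩ := Finset.mem_filter.mp hK
    by_contra h
    push_neg at h
    have hKc : ¬ c ≤ K := not_le.mpr h
    rw [hpre' K, hμ', if_neg hKc] at hKval
    have := hlow K hKT
    omega

end LCAux




namespace LCGraph

variable {V : Type} [Fintype V] [DecidableEq V]

/-- The graph with edge set `D`. -/
def HD (D : Finset (Sym2 V)) : SimpleGraph V := SimpleGraph.fromEdgeSet ↑D

/-- The connected component of (an endpoint of) an edge. -/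
def cmp (D : Finset (Sym2 V)) (e : Sym2 V) : (HD D).ConnectedComponent :=
  (HD D).connectedComponentMk e.out.1

noncomputable instance compLO (D : Finset (Sym2 V)) :
    LinearOrder ((HD D).ConnectedComponent) := IsWellOrder.linearOrder WellOrderingRel

lemma cmp_eq_mk {D : Finset (Sym2 V)} {e : Sym2 V} {x : V}
    (he : e ∈ D) (hnd : ¬e.IsDiag) (hx : x ∈ e) :
    (HD D).connectedComponentMk x = cmp D e := by
  have h1 : e.out.1 ∈ e := e.out_fst_mem
  have h2 : e.out.2 ∈ e := e.out_snd_mem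
  have hout : e = s(e.out.1, e.out.2) := by
    conv_lhs => rw [← e.out_eq]
  have hne : e.out.1 ≠ e.out.2 := by
    intro h
    apply hnd
    rw [hout]
    exact Sym2.mk_isDiag_iff.mpr h
  have hadj : (HD D).Adj e.out.1 e.out.2 := by
    rw [HD, SimpleGraph.fromEdgeSet_adj]
    exact ⟨by rw [← hout]; exact_mod_cast he, hne⟩
  rw [hout] at hx
  rcases Sym2.mem_iff.mp hx with rfl | rfl
  · rfl
  · exact (SimpleGraph.ConnectedComponent.connectedComponentMk_eq_of_adj hadj).symm

lemma cmp_eq_cmp {D : Finset (Sym2 V)} {e f : Sym2 V} {x : V}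
    (he : e ∈ D) (hnde : ¬e.IsDiag) (hf : f ∈ D) (hndf : ¬f.IsDiag)
    (hxe : x ∈ e) (hxf : x ∈ f) : cmp D e = cmp D f := by
  rw [← cmp_eq_mk he hnde hxe, ← cmp_eq_mk hf hndf hxf]

/-- vertex set of a component -/
def wset (D : Finset (Sym2 V)) (K : (HD D).ConnectedComponent) : Finset V :=
  Finset.univ.filter (fun x => (HD D).connectedComponentMk x = K)

omit [Fintype V] [DecidableEq V] in
lemma exists_parent {H : SimpleGraph V} {x r : V} (hre : H.Reachable x r) (hne : x ≠ r) :
    ∃ y, H.Adj x y ∧ H.dist y r + 1 = H.dist x r := by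
  obtain ⟨p, hp⟩ := hre.exists_walk_length_eq_dist
  cases p with
  | nil => exact absurd rfl hne
  | @cons _ y _ hadj q =>
    refine ⟨y, hadj, ?_⟩
    have hd : H.dist x r = q.length + 1 := by
      rw [← hp, SimpleGraph.Walk.length_cons]
    have h1 : H.dist y r ≤ q.length := SimpleGraph.dist_le q
    obtain ⟨q', hq'⟩ := (q.reachable).exists_walk_length_eq_dist
    have h2 : H.dist x r ≤ H.dist y r + 1 := by
      have := SimpleGraph.dist_le (SimpleGraph.Walk.cons hadj q')
      rwa [SimpleGraph.Walk.length_cons, hq'] at this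
    omega

/-- connectivity bound: a component on `m` vertices has at least `m - 1` edges. -/
lemma wset_card_le (D : Finset (Sym2 V)) (hD : ∀ e ∈ D, ¬e.IsDiag)
    (K : (HD D).ConnectedComponent) :
    (wset D K).card ≤ (D.filter (fun e => cmp D e = K)).card + 1 := by
  obtain ⟨r, hr⟩ := Quot.exists_rep K
  have hrK : (HD D).connectedComponentMk r = K := hr
  have hrw : r ∈ wset D K := by simp [wset, hrK]
  -- parent function
  have hpf : ∀ x ∈ (wset D K).erase r,
      ∃ y, (HD D).Adj x y ∧ (HD D).dist y r + 1 = (HD D).dist x r := by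
    intro x hx
    obtain ⟨hxr, hxw⟩ := Finset.mem_erase.mp hx
    have hxK : (HD D).connectedComponentMk x = K := (Finset.mem_filter.mp hxw).2
    have hre : (HD D).Reachable x r := SimpleGraph.ConnectedComponent.exact (by rw [hxK, hrK])
    exact exists_parent hre hxr
  set pf : V → V := fun x =>
    if h : x ∈ (wset D K).erase r then Classical.choose (hpf x h) else x with hpfdef
  have hpf2 : ∀ x ∈ (wset D K).erase r,
      (HD D).Adj x (pf x) ∧ (HD D).dist (pf x) r + 1 = (HD D).dist x r := by
    intro x hx
    simp only [hpfdef, dif_pos hx]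
    exact Classical.choose_spec (hpf x hx)
  have hmaps : ∀ x ∈ (wset D K).erase r,
      s(x, pf x) ∈ D.filter (fun e => cmp D e = K) := by
    intro x hx
    obtain ⟨hadj, _⟩ := hpf2 x hx
    have hmem : s(x, pf x) ∈ D := by
      have := hadj
      rw [HD, SimpleGraph.fromEdgeSet_adj] at this
      exact_mod_cast this.1
    refine Finset.mem_filter.mpr ⟨hmem, ?_⟩
    have hnd : ¬(s(x, pf x)).IsDiag := Sym2.mk_isDiag_iff.not.mpr hadj.ne
    rw [← cmp_eq_mk hmem hnd (Sym2.mem_mk_left _ _)]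
    exact (Finset.mem_filter.mp (Finset.mem_erase.mp hx).2).2
  have hinj : Set.InjOn (fun x => s(x, pf x)) ((wset D K).erase r : Set V) := by
    intro x hx y hy hxy
    simp only [Finset.coe_erase, Set.mem_diff] at hx hy
    have hx' : x ∈ (wset D K).erase r := by
      rw [Finset.mem_erase]; exact ⟨by simpa using hx.2, by exact_mod_cast hx.1⟩
    have hy' : y ∈ (wset D K).erase r := by
      rw [Finset.mem_erase]; exact ⟨by simpa using hy.2, by exact_mod_cast hy.1⟩
    rcases Sym2.eq_iff.mp hxy with ⟨h1, _⟩ | ⟨h1, h2⟩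
    · exact h1
    · -- x = pf y and pf x = y : contradiction via distances
      exfalso
      obtain ⟨_, hdx⟩ := hpf2 x hx'
      obtain ⟨_, hdy⟩ := hpf2 y hy'
      rw [h2] at hdx
      rw [← h1] at hdy
      omega
  have hcard := Finset.card_le_card_of_injOn (fun x => s(x, pf x)) hmaps hinj
  have herase : ((wset D K).erase r).card = (wset D K).card - 1 :=
    Finset.card_erase_of_mem hrw
  have hpos : 1 ≤ (wset D K).card := Finset.card_pos.mpr ⟨r, hrw⟩
  omega

lemma card_endpoints {e : Sym2 V} (hnd : ¬e.IsDiag) :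
    (Finset.univ.filter (fun x => x ∈ e)).card = 2 := by
  induction e with
  | _ a b =>
    have hab : a ≠ b := fun h => hnd (Sym2.mk_isDiag_iff.mpr h)
    have : Finset.univ.filter (fun x => x ∈ s(a, b)) = {a, b} := by
      ext x
      simp [Sym2.mem_iff]
    rw [this, Finset.card_insert_of_notMem (by simp [hab]), Finset.card_singleton]

/-- matching bound: a matching inside component `K` has at most `|wset K| / 2` edges. -/
lemma matching_bound {G : SimpleGraph V} {M : Finset (Sym2 V)} (hM : IsMatching G M)
    (D : Finset (Sym2 V)) (hMD : M ⊆ D) (K : (HD D).ConnectedComponent) :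
    2 * (M.filter (fun e => cmp D e = K)).card ≤ (wset D K).card := by
  set s := M.filter (fun e => cmp D e = K) with hs
  have hnd : ∀ e ∈ s, ¬e.IsDiag := fun e he =>
    G.not_isDiag_of_mem_edgeSet (hM.1 e (Finset.mem_filter.mp he).1)
  have hdisj : ∀ e ∈ s, ∀ f ∈ s, e ≠ f →
      Disjoint (Finset.univ.filter (fun x => x ∈ e)) (Finset.univ.filter (fun x => x ∈ f)) := by
    intro e he f hf hef
    rw [Finset.disjoint_left]
    intro x hxe hxf
    exact hM.2 e (Finset.mem_filter.mp he).1 f (Finset.mem_filter.mp hf).1 hef x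
      (Finset.mem_filter.mp hxe).2 (Finset.mem_filter.mp hxf).2
  have hbiu : (s.biUnion (fun e => Finset.univ.filter (fun x => x ∈ e))).card
      = ∑ e ∈ s, (Finset.univ.filter (fun x => x ∈ e)).card :=
    Finset.card_biUnion hdisj
  have hsum : ∑ e ∈ s, (Finset.univ.filter (fun x => x ∈ e)).card = 2 * s.card := by
    rw [Finset.sum_congr rfl (fun e he => card_endpoints (hnd e he))]
    rw [Finset.sum_const, smul_eq_mul, mul_comm]
  have hsub : s.biUnion (fun e => Finset.univ.filter (fun x => x ∈ e)) ⊆ wset D K := by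
    intro x hx
    obtain ⟨e, he, hxe⟩ := Finset.mem_biUnion.mp hx
    obtain ⟨heM, heK⟩ := Finset.mem_filter.mp he
    refine Finset.mem_filter.mpr ⟨Finset.mem_univ _, ?_⟩
    rw [cmp_eq_mk (hMD heM) (hnd e he) (Finset.mem_filter.mp hxe).2]
    exact heK
  calc 2 * s.card = (s.biUnion (fun e => Finset.univ.filter (fun x => x ∈ e))).card := by
        rw [hbiu, hsum]
    _ ≤ (wset D K).card := Finset.card_le_card hsub

end LCGraph
section MainPart
open LCGraph

variable {V : Type} [Fintype V] [DecidableEq V]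

namespace LCGraph

def wgt (D A B : Finset (Sym2 V)) (K : (HD D).ConnectedComponent) : ℤ :=
  (((B ∩ D).filter (fun e => cmp D e = K)).card : ℤ)
    - (((A ∩ D).filter (fun e => cmp D e = K)).card : ℤ)

def Tset (D A B : Finset (Sym2 V)) : Finset ((HD D).ConnectedComponent) :=
  (D.image (cmp D)).filter (fun K => wgt D A B K ≠ 0)

def selE (D A B : Finset (Sym2 V)) : Finset (Sym2 V) :=
  D.filter (fun e => cmp D e ∈ LCAux.mins (LCAux.goodSet (Tset D A B) (wgt D A B)))

def recE (D A B : Finset (Sym2 V)) : Finset (Sym2 V) :=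
  D.filter (fun e => cmp D e ∈ LCAux.mins ((Tset D A B).filter
    (fun K => LCAux.pre (Tset D A B) (wgt D A B) K
      = LCAux.lowv (Tset D A B) (wgt D A B))))

omit [Fintype V] in
lemma matching_inter {G : SimpleGraph V} {A : Finset (Sym2 V)} (hA : IsMatching G A)
    (D : Finset (Sym2 V)) : IsMatching G (A ∩ D) :=
  ⟨fun e he => hA.1 e (Finset.mem_of_mem_inter_left he),
   fun e he f hf hef x hxe => hA.2 e (Finset.mem_of_mem_inter_left he) f
     (Finset.mem_of_mem_inter_left hf) hef x hxe⟩

omit [Fintype V] in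
lemma swap_matching {G : SimpleGraph V} {A B E : Finset (Sym2 V)}
    (hA : IsMatching G A) (hB : IsMatching G B)
    (hED : E ⊆ A ∆ B)
    (hcl : ∀ e ∈ A ∆ B, ∀ f ∈ E, ∀ x : V, x ∈ e → x ∈ f → e ∈ E) :
    IsMatching G (A ∆ E) := by
  have hEB : ∀ f ∈ E, f ∉ A → f ∈ B := by
    intro f hf hfA
    rcases Finset.mem_symmDiff.mp (hED hf) with ⟨h, _⟩ | ⟨h, _⟩
    · exact absurd h hfA
    · exact h
  constructor
  · intro e he
    rcases Finset.mem_symmDiff.mp he with ⟨h1, _⟩ | ⟨h1, h2⟩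
    · exact hA.1 e h1
    · by_cases hA' : e ∈ A
      · exact hA.1 e hA'
      · exact hB.1 e (hEB e h1 hA')
  · intro e he f hf hef x hxe hxf
    rcases Finset.mem_symmDiff.mp he with ⟨heA, heE⟩ | ⟨heE, heA⟩ <;>
      rcases Finset.mem_symmDiff.mp hf with ⟨hfA, hfE⟩ | ⟨hfE, hfA⟩
    · exact hA.2 e heA f hfA hef x hxe hxf
    · have hfB : f ∈ B := hEB f hfE hfA
      by_cases heB : e ∈ B
      · exact hB.2 e heB f hfB hef x hxe hxf
      · exact heE (hcl e (Finset.mem_symmDiff.mpr (Or.inl ⟨heA, heB⟩)) f hfE x hxe hxf)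
    · have heB : e ∈ B := hEB e heE heA
      by_cases hfB : f ∈ B
      · exact hB.2 e heB f hfB hef x hxe hxf
      · exact hfE (hcl f (Finset.mem_symmDiff.mpr (Or.inl ⟨hfA, hfB⟩)) e heE x hxf hxe)
    · exact hB.2 e (hEB e heE heA) f (hEB f hfE hfA) hef x hxe hxf

omit [Fintype V] in
lemma card_symmDiff (A E : Finset (Sym2 V)) :
    (A ∆ E).card + (A ∩ E).card = A.card + (E \ A).card := by
  have h1 : A ∆ E = (A \ E) ∪ (E \ A) := by
    ext e
    simp only [Finset.mem_symmDiff, Finset.mem_union, Finset.mem_sdiff]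
  have h2 : Disjoint (A \ E) (E \ A) := by
    rw [Finset.disjoint_left]; intro a ha hb
    exact (Finset.mem_sdiff.mp ha).2 (Finset.mem_sdiff.mp hb).1
  have h3 := Finset.card_sdiff_add_card_inter A E
  rw [h1, Finset.card_union_of_disjoint h2]
  omega

theorem main_step {G : SimpleGraph V} {A B : Finset (Sym2 V)}
    (hA : IsMatching G A) (hB : IsMatching G B) (hcard : A.card + 2 = B.card) :
    IsMatching G (A ∆ selE (A ∆ B) A B) ∧ IsMatching G (B ∆ selE (A ∆ B) A B) ∧
    (A ∆ selE (A ∆ B) A B).card = A.card + 1 ∧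
    (B ∆ selE (A ∆ B) A B).card + 1 = B.card ∧
    recE ((A ∆ selE (A ∆ B) A B) ∆ (B ∆ selE (A ∆ B) A B))
        (A ∆ selE (A ∆ B) A B) (B ∆ selE (A ∆ B) A B) = selE (A ∆ B) A B ∧
    (A ∆ selE (A ∆ B) A B) ∆ selE (A ∆ B) A B = A ∧
    (B ∆ selE (A ∆ B) A B) ∆ selE (A ∆ B) A B = B := by
  set D := A ∆ B with hD
  have hDedge : ∀ e ∈ D, e ∈ G.edgeSet := by
    intro e he
    rcases Finset.mem_symmDiff.mp he with ⟨h, _⟩ | ⟨h, _⟩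
    · exact hA.1 e h
    · exact hB.1 e h
  have hDnd : ∀ e ∈ D, ¬e.IsDiag := fun e he => G.not_isDiag_of_mem_edgeSet (hDedge e he)
  set T := Tset D A B with hT
  set w := wgt D A B with hw
  -- structural bound
  have hfibsplit : ∀ K, (D.filter (fun e => cmp D e = K)).card
      = ((A ∩ D).filter (fun e => cmp D e = K)).card
        + ((B ∩ D).filter (fun e => cmp D e = K)).card := by
    intro K
    have hun : D.filter (fun e => cmp D e = K)
        = ((A ∩ D).filter (fun e => cmp D e = K)) ∪ ((B ∩ D).filter (fun e => cmp D e = K)) := by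
      ext e
      simp only [Finset.mem_filter, Finset.mem_union, Finset.mem_inter, hD,
        Finset.mem_symmDiff]
      tauto
    have hdisj : Disjoint ((A ∩ D).filter (fun e => cmp D e = K))
        ((B ∩ D).filter (fun e => cmp D e = K)) := by
      rw [Finset.disjoint_left]
      intro e he hf
      have heA : e ∈ A := (Finset.mem_inter.mp (Finset.mem_filter.mp he).1).1
      have heB : e ∈ B := (Finset.mem_inter.mp (Finset.mem_filter.mp hf).1).1
      have heD : e ∈ D := (Finset.mem_inter.mp (Finset.mem_filter.mp he).1).2
      rw [hD, Finset.mem_symmDiff] at heD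
      tauto
    rw [hun, Finset.card_union_of_disjoint hdisj]
  have hw_pm : ∀ K ∈ T, w K = 1 ∨ w K = -1 := by
    intro K hK
    have hK0 : w K ≠ 0 := (Finset.mem_filter.mp hK).2
    have hb1 := matching_bound (matching_inter hB D) D Finset.inter_subset_right K
    have hb2 := matching_bound (matching_inter hA D) D Finset.inter_subset_right K
    have hb3 := wset_card_le D hDnd K
    have hb4 := hfibsplit K
    rw [hw, wgt] at hK0 ⊢
    omega
  have hsum : ∑ K ∈ T, w K = 2 := by
    have h1 : ∑ K ∈ T, w K = ∑ K ∈ D.image (cmp D), w K := by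
      rw [hT, Tset]
      exact Finset.sum_filter_of_ne (fun K _ h0 => h0)
    have h2 : ∑ K ∈ D.image (cmp D), ((B ∩ D).filter (fun e => cmp D e = K)).card
        = (B ∩ D).card := by
      rw [eq_comm]
      exact Finset.card_eq_sum_card_fiberwise (fun e he =>
        Finset.mem_image_of_mem (cmp D) (Finset.mem_inter.mp he).2)
    have h3 : ∑ K ∈ D.image (cmp D), ((A ∩ D).filter (fun e => cmp D e = K)).card
        = (A ∩ D).card := by
      rw [eq_comm]
      exact Finset.card_eq_sum_card_fiberwise (fun e he =>
        Finset.mem_image_of_mem (cmp D) (Finset.mem_inter.mp he).2)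
    have h4 : A ∩ D = A \ B := by
      ext e; simp only [Finset.mem_inter, Finset.mem_sdiff, hD, Finset.mem_symmDiff]; tauto
    have h5 : B ∩ D = B \ A := by
      ext e; simp only [Finset.mem_inter, Finset.mem_sdiff, hD, Finset.mem_symmDiff]; tauto
    have h6 := Finset.card_sdiff_add_card_inter A B
    have h7 := Finset.card_sdiff_add_card_inter B A
    have h8 : (A ∩ B).card = (B ∩ A).card := by rw [Finset.inter_comm]
    rw [h1]
    have h9 : ∑ K ∈ D.image (cmp D), w K
        = ((B ∩ D).card : ℤ) - ((A ∩ D).card : ℤ) := by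
      rw [hw]
      unfold wgt
      rw [Finset.sum_sub_distrib]
      rw [← Nat.cast_sum, ← Nat.cast_sum, h2, h3]
    rw [h9, h4, h5]
    have h10 : (B \ A).card + (B ∩ A).card = B.card := h7
    have h11 : (A \ B).card + (A ∩ B).card = A.card := h6
    omega
  obtain ⟨c, hcT, hwc, hmins, hprec, hge⟩ := LCAux.part1 T w hw_pm hsum
  have hselE : selE D A B = D.filter (fun e => cmp D e = c) := by
    unfold selE
    rw [← hT, ← hw, hmins]
    ext e
    simp [Finset.mem_filter, Finset.mem_singleton]
  set E := D.filter (fun e => cmp D e = c) with hE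
  rw [hselE]
  have hED : E ⊆ D := Finset.filter_subset _ _
  have hcl : ∀ e ∈ D, ∀ f ∈ E, ∀ x : V, x ∈ e → x ∈ f → e ∈ E := by
    intro e he f hf x hxe hxf
    obtain ⟨hfD, hfc⟩ := Finset.mem_filter.mp hf
    refine Finset.mem_filter.mpr ⟨he, ?_⟩
    rw [cmp_eq_cmp he (hDnd e he) hfD (hDnd f hfD) hxe hxf]
    exact hfc
  have hMA' : IsMatching G (A ∆ E) := swap_matching hA hB hED hcl
  have hMB' : IsMatching G (B ∆ E) := by
    have hBA : B ∆ A = D := by rw [hD, symmDiff_comm]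
    apply swap_matching hB hA (by rw [hBA]; exact hED)
    rw [hBA]; exact hcl
  -- cardinalities
  have hAE : A ∩ E = (A ∩ D).filter (fun e => cmp D e = c) := by
    ext e
    simp only [Finset.mem_inter, hE, Finset.mem_filter]
    tauto
  have hEA : E \ A = (B ∩ D).filter (fun e => cmp D e = c) := by
    ext e
    simp only [Finset.mem_sdiff, hE, Finset.mem_filter, Finset.mem_inter]
    constructor
    · rintro ⟨⟨heD, hec⟩, heA⟩
      have : e ∈ B := by
        rcases Finset.mem_symmDiff.mp (hD ▸ heD) with ⟨h, _⟩ | ⟨h, _⟩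
        · exact absurd h heA
        · exact h
      exact ⟨⟨this, heD⟩, hec⟩
    · rintro ⟨⟨heB, heD⟩, hec⟩
      have : e ∉ A := by
        rcases Finset.mem_symmDiff.mp (hD ▸ heD) with ⟨_, h⟩ | ⟨_, h⟩
        · tauto
        · exact h
      exact ⟨⟨heD, hec⟩, this⟩
  have hBE : B ∩ E = (B ∩ D).filter (fun e => cmp D e = c) := by
    ext e
    simp only [Finset.mem_inter, hE, Finset.mem_filter]
    tauto
  have hEB : E \ B = (A ∩ D).filter (fun e => cmp D e = c) := by
    ext e
    simp only [Finset.mem_sdiff, hE, Finset.mem_filter, Finset.mem_inter]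
    constructor
    · rintro ⟨⟨heD, hec⟩, heB⟩
      have : e ∈ A := by
        rcases Finset.mem_symmDiff.mp (hD ▸ heD) with ⟨h, _⟩ | ⟨h, _⟩
        · exact h
        · exact absurd h heB
      exact ⟨⟨this, heD⟩, hec⟩
    · rintro ⟨⟨heA, heD⟩, hec⟩
      have : e ∉ B := by
        rcases Finset.mem_symmDiff.mp (hD ▸ heD) with ⟨_, h⟩ | ⟨_, h⟩
        · exact h
        · tauto
      exact ⟨⟨heD, hec⟩, this⟩
  have hwcnat : ((B ∩ D).filter (fun e => cmp D e = c)).card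
      = ((A ∩ D).filter (fun e => cmp D e = c)).card + 1 := by
    have := hwc
    rw [hw] at this
    unfold wgt at this
    omega
  have hcardA : (A ∆ E).card = A.card + 1 := by
    have := card_symmDiff A E
    rw [hAE, hEA] at this
    have hle : ((A ∩ D).filter (fun e => cmp D e = c)).card ≤ A.card := by
      calc ((A ∩ D).filter (fun e => cmp D e = c)).card
          ≤ (A ∩ D).card := Finset.card_filter_le _ _
        _ ≤ A.card := Finset.card_le_card Finset.inter_subset_left
    omega
  have hcardB : (B ∆ E).card + 1 = B.card := by
    have := card_symmDiff B E
    rw [hBE, hEB] at this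
    omega
  -- recovery
  have hDD : (A ∆ E) ∆ (B ∆ E) = D := by
    rw [hD]
    ext e
    simp only [Finset.mem_symmDiff]
    tauto
  rw [hDD]
  set A' := A ∆ E with hA'
  set B' := B ∆ E with hB'
  have hmemE : ∀ e, e ∈ E ↔ (e ∈ D ∧ cmp D e = c) := by
    intro e; rw [hE]; simp [Finset.mem_filter]
  have hfibA' : ∀ K, (A' ∩ D).filter (fun e => cmp D e = K)
      = if K = c then (B ∩ D).filter (fun e => cmp D e = K)
        else (A ∩ D).filter (fun e => cmp D e = K) := by
    intro K
    by_cases hKc : K = c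
    · subst hKc
      rw [if_pos rfl]
      ext e
      constructor
      · intro he
        obtain ⟨heA'D, h3⟩ := Finset.mem_filter.mp he
        obtain ⟨heA', heD⟩ := Finset.mem_inter.mp heA'D
        have heE : e ∈ E := (hmemE e).mpr ⟨heD, h3⟩
        have heB : e ∈ B := by
          rcases Finset.mem_symmDiff.mp heA' with ⟨heA, heEn⟩ | ⟨heEn, heA⟩
          · exact absurd heE heEn
          · rcases Finset.mem_symmDiff.mp (hD ▸ heD) with ⟨h, _⟩ | ⟨h, _⟩
            · exact absurd h heA
            · exact h
        exact Finset.mem_filter.mpr ⟨Finset.mem_inter.mpr ⟨heB, heD⟩, h3⟩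
      · intro he
        obtain ⟨heBD, h3⟩ := Finset.mem_filter.mp he
        obtain ⟨heB, heD⟩ := Finset.mem_inter.mp heBD
        have heE : e ∈ E := (hmemE e).mpr ⟨heD, h3⟩
        have heA : e ∉ A := by
          rcases Finset.mem_symmDiff.mp (hD ▸ heD) with ⟨_, h⟩ | ⟨_, h⟩
          · exact absurd heB h
          · exact h
        exact Finset.mem_filter.mpr ⟨Finset.mem_inter.mpr
          ⟨Finset.mem_symmDiff.mpr (Or.inr ⟨heE, heA⟩), heD⟩, h3⟩
    · rw [if_neg hKc]
      ext e
      constructor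
      · intro he
        obtain ⟨heA'D, h3⟩ := Finset.mem_filter.mp he
        obtain ⟨heA', heD⟩ := Finset.mem_inter.mp heA'D
        have heE : e ∉ E := fun hE' => hKc (h3.symm.trans ((hmemE e).mp hE').2)
        have heA : e ∈ A := by
          rcases Finset.mem_symmDiff.mp heA' with ⟨h, _⟩ | ⟨h, _⟩
          · exact h
          · exact absurd h heE
        exact Finset.mem_filter.mpr ⟨Finset.mem_inter.mpr ⟨heA, heD⟩, h3⟩
      · intro he
        obtain ⟨heAD, h3⟩ := Finset.mem_filter.mp he
        obtain ⟨heA, heD⟩ := Finset.mem_inter.mp heAD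
        have heE : e ∉ E := fun hE' => hKc (h3.symm.trans ((hmemE e).mp hE').2)
        exact Finset.mem_filter.mpr ⟨Finset.mem_inter.mpr
          ⟨Finset.mem_symmDiff.mpr (Or.inl ⟨heA, heE⟩), heD⟩, h3⟩
  have hfibB' : ∀ K, (B' ∩ D).filter (fun e => cmp D e = K)
      = if K = c then (A ∩ D).filter (fun e => cmp D e = K)
        else (B ∩ D).filter (fun e => cmp D e = K) := by
    intro K
    by_cases hKc : K = c
    · subst hKc
      rw [if_pos rfl]
      ext e
      constructor
      · intro he
        obtain ⟨heB'D, h3⟩ := Finset.mem_filter.mp he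
        obtain ⟨heB', heD⟩ := Finset.mem_inter.mp heB'D
        have heE : e ∈ E := (hmemE e).mpr ⟨heD, h3⟩
        have heA : e ∈ A := by
          rcases Finset.mem_symmDiff.mp heB' with ⟨heB, heEn⟩ | ⟨heEn, heB⟩
          · exact absurd heE heEn
          · rcases Finset.mem_symmDiff.mp (hD ▸ heD) with ⟨h, _⟩ | ⟨h, _⟩
            · exact h
            · exact absurd h heB
        exact Finset.mem_filter.mpr ⟨Finset.mem_inter.mpr ⟨heA, heD⟩, h3⟩
      · intro he
        obtain ⟨heAD, h3⟩ := Finset.mem_filter.mp he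
        obtain ⟨heA, heD⟩ := Finset.mem_inter.mp heAD
        have heE : e ∈ E := (hmemE e).mpr ⟨heD, h3⟩
        have heB : e ∉ B := by
          rcases Finset.mem_symmDiff.mp (hD ▸ heD) with ⟨_, h⟩ | ⟨_, h⟩
          · exact h
          · exact absurd heA h
        exact Finset.mem_filter.mpr ⟨Finset.mem_inter.mpr
          ⟨Finset.mem_symmDiff.mpr (Or.inr ⟨heE, heB⟩), heD⟩, h3⟩
    · rw [if_neg hKc]
      ext e
      constructor
      · intro he
        obtain ⟨heB'D, h3⟩ := Finset.mem_filter.mp he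
        obtain ⟨heB', heD⟩ := Finset.mem_inter.mp heB'D
        have heE : e ∉ E := fun hE' => hKc (h3.symm.trans ((hmemE e).mp hE').2)
        have heB : e ∈ B := by
          rcases Finset.mem_symmDiff.mp heB' with ⟨h, _⟩ | ⟨h, _⟩
          · exact h
          · exact absurd h heE
        exact Finset.mem_filter.mpr ⟨Finset.mem_inter.mpr ⟨heB, heD⟩, h3⟩
      · intro he
        obtain ⟨heBD, h3⟩ := Finset.mem_filter.mp he
        obtain ⟨heB, heD⟩ := Finset.mem_inter.mp heBD
        have heE : e ∉ E := fun hE' => hKc (h3.symm.trans ((hmemE e).mp hE').2)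
        exact Finset.mem_filter.mpr ⟨Finset.mem_inter.mpr
          ⟨Finset.mem_symmDiff.mpr (Or.inl ⟨heB, heE⟩), heD⟩, h3⟩
  have hw' : ∀ K, wgt D A' B' K = if K = c then -1 else w K := by
    intro K
    unfold wgt
    rw [hfibA' K, hfibB' K]
    by_cases hKc : K = c
    · rw [if_pos hKc, if_pos hKc, if_pos hKc, hKc, hwcnat]
      push_cast
      ring
    · rw [if_neg hKc, if_neg hKc, if_neg hKc, hw]
      unfold wgt
      rfl
  have hT' : Tset D A' B' = T := by
    rw [hT]
    unfold Tset
    ext K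
    simp only [Finset.mem_filter]
    rw [hw' K]
    by_cases hKc : K = c
    · subst hKc
      rw [if_pos rfl]
      constructor
      · rintro ⟨h1, _⟩
        refine ⟨h1, ?_⟩
        rw [← hw, hwc]
        norm_num
      · rintro ⟨h1, _⟩
        exact ⟨h1, by norm_num⟩
    · rw [if_neg hKc, ← hw]
  have hrec : recE D A' B' = E := by
    unfold recE
    rw [hT']
    have hpart2 := LCAux.part2 T w (wgt D A' B') c hcT
      (fun K _ => hw' K) hwc hprec hge
    rw [hpart2]
    rw [hE]
    ext e
    simp [Finset.mem_filter, Finset.mem_singleton]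
  have hcancelA : A' ∆ E = A := by
    rw [hA']
    ext e
    simp only [Finset.mem_symmDiff]
    tauto
  have hcancelB : B' ∆ E = B := by
    rw [hB']
    ext e
    simp only [Finset.mem_symmDiff]
    tauto
  exact ⟨hMA', hMB', hcardA, hcardB, hrec, hcancelA, hcancelB⟩

end LCGraph
end MainPart


/-- The Conway polynomial `∇(Q)(z) = Σ_i b_i(Q) z^{n−2i}` of a forest has
nonnegative coefficients, and the sequence of matching numbers `b_i(Q)` is
log-concave: `b_{i−1} b_{i+1} ≤ b_i²`. -/
theorem conway_log_concave
    {V : Type} [Fintype V] [DecidableEq V] (G : SimpleGraph V)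
    (hforest : G.IsAcyclic) :
    (∀ i : ℕ, 0 ≤ (matchCount G i : ℤ)) ∧
    ∀ i : ℕ, 1 ≤ i →
      matchCount G (i - 1) * matchCount G (i + 1) ≤ matchCount G i ^ 2 := by
  constructor
  · intro i
    exact Int.natCast_nonneg _
  · intro i hi
    set F : ℕ → Finset (Finset (Sym2 V)) :=
      fun j => Finset.univ.filter (fun M => M.card = j ∧ IsMatching G M) with hF
    have hmc : ∀ j, matchCount G j = (F j).card := by
      intro j
      have hset : {M : Finset (Sym2 V) | M.card = j ∧ IsMatching G M} = ↑(F j) := by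
        ext M; simp [hF]
      rw [matchCount, hset, Set.ncard_coe_finset]
    rw [hmc, hmc, hmc, pow_two]
    set Φ : Finset (Sym2 V) × Finset (Sym2 V) → Finset (Sym2 V) × Finset (Sym2 V) :=
      fun p => (p.1 ∆ LCGraph.selE (p.1 ∆ p.2) p.1 p.2,
        p.2 ∆ LCGraph.selE (p.1 ∆ p.2) p.1 p.2) with hΦ
    set Ψ : Finset (Sym2 V) × Finset (Sym2 V) → Finset (Sym2 V) × Finset (Sym2 V) :=
      fun q => (q.1 ∆ LCGraph.recE (q.1 ∆ q.2) q.1 q.2,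
        q.2 ∆ LCGraph.recE (q.1 ∆ q.2) q.1 q.2) with hΨ
    have hstep : ∀ p ∈ (F (i-1)) ×ˢ (F (i+1)), Φ p ∈ (F i) ×ˢ (F i) ∧ Ψ (Φ p) = p := by
      rintro ⟨A, B⟩ hp
      rw [Finset.mem_product] at hp
      dsimp only at hp
      obtain ⟨hpA, hpB⟩ := hp
      obtain ⟨-, hcA, hmA⟩ := Finset.mem_filter.mp hpA
      obtain ⟨-, hcB, hmB⟩ := Finset.mem_filter.mp hpB
      have hcard : A.card + 2 = B.card := by omega
      obtain ⟨m1, m2, c1, c2, hrec, canA, canB⟩ := LCGraph.main_step hmA hmB hcard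
      have hΦp : Φ (A, B) = (A ∆ LCGraph.selE (A ∆ B) A B,
          B ∆ LCGraph.selE (A ∆ B) A B) := rfl
      constructor
      · rw [hΦp, Finset.mem_product]
        refine ⟨Finset.mem_filter.mpr ⟨Finset.mem_univ _, ?_, m1⟩,
                Finset.mem_filter.mpr ⟨Finset.mem_univ _, ?_, m2⟩⟩
        · dsimp only
          omega
        · dsimp only
          omega
      · rw [hΦp]
        simp only [hΨ]
        rw [hrec, canA, canB]
    calc (F (i-1)).card * (F (i+1)).card = ((F (i-1)) ×ˢ (F (i+1))).card :=
          (Finset.card_product _ _).symm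
      _ ≤ ((F i) ×ˢ (F i)).card := by
          apply Finset.card_le_card_of_injOn Φ (fun p hp => (hstep p hp).1)
          intro p hp q hq hpq
          have h1 := (hstep p hp).2
          have h2 := (hstep q hq).2
          rw [← h1, ← h2, hpq]
      _ = (F i).card * (F i).card := Finset.card_product _ _
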